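/- arXiv:1907.10925 — 2 statements merged into one kernel-verified Lean document; each statement's English description precedes it below -/
import Mathlib

section
/- If two epistemic logic programs Π1 and Π2 are uniformly CWV-equivalent, then they are uniformly WV-equivalent. -/
universe u

/-- A literal: an atom or its default negation. -/
inductive Lit (α : Type u) where
  | pos : α → Lit α
  | neg : α → Lit α

/-- Flip a literal (used to simplify double default negation). -/
def Lit.flip {α : Type u} : Lit α → Lit α
  | .pos a => .neg a
  | .neg a => .pos a

/-- Satisfaction of a literal by an interpretation. -/
def litSat {α : Type u} (I : Set α) : Lit α → Prop
  | .pos a => a ∈ I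
  | .neg a => a ∉ I

/-- A ground logic-program rule `a₁ ∨ ⋯ ∨ a_l ← a_{l+1}, …, a_m, ¬ℓ₁, …, ¬ℓ_n`:
`head` are the head atoms, `pbody` the positive body atoms, and `nbody` the
literals appearing default-negated in the body. -/
structure Rule (α : Type u) where
  head : Set α
  pbody : Set α
  nbody : Set (Lit α)

/-- `I` is a model of the rule `r`. -/
def modelsRule {α : Type u} (I : Set α) (r : Rule α) : Prop :=
  (r.pbody ⊆ I ∧ ∀ l ∈ r.nbody, ¬ litSat I l) → ∃ a ∈ r.head, a ∈ I

/-- `I` is a model of the program `Π`. -/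
def models {α : Type u} (I : Set α) (P : Set (Rule α)) : Prop :=
  ∀ r ∈ P, modelsRule I r

/-- `X` is a model of the GL-reduct `Π^Y`. -/
def modelsReduct {α : Type u} (X Y : Set α) (P : Set (Rule α)) : Prop :=
  ∀ r ∈ P, (∀ l ∈ r.nbody, ¬ litSat Y l) → r.pbody ⊆ X → ∃ a ∈ r.head, a ∈ X

/-- `M` is an answer set of `Π`: a model of `Π` no proper subset of which
models the GL-reduct `Π^M`. -/
def isAnswerSet {α : Type u} (P : Set (Rule α)) (M : Set α) : Prop :=
  models M P ∧ ¬ ∃ X, X ⊂ M ∧ modelsReduct X M P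

/-- The set of answer sets of `Π`. -/
def answerSets {α : Type u} (P : Set (Rule α)) : Set (Set α) :=
  {M | isAnswerSet P M}

/-- `(X, Y)` is an SE-model of `Π`. -/
def isSE {α : Type u} (P : Set (Rule α)) (X Y : Set α) : Prop :=
  X ⊆ Y ∧ models Y P ∧ modelsReduct X Y P

/-- `(X, Y)` is a UE-model of `Π`. -/
def isUE {α : Type u} (P : Set (Rule α)) (X Y : Set α) : Prop :=
  isSE P X Y ∧ (X = Y ∨ (X ⊂ Y ∧ ¬ ∃ X', isSE P X' Y ∧ X ⊂ X' ∧ X' ⊂ Y))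

/-- An ELP rule: head atoms, positive body atoms, default-negated body
literals, epistemic body literals `not ℓ`, and default-negated epistemic body
literals `¬ not ℓ`.  (Epistemic literals `not ℓ` are represented by the
literal `ℓ`.) -/
structure ERule (α : Type u) where
  head : Set α
  pbody : Set α
  nbody : Set (Lit α)
  ebody : Set (Lit α)
  nebody : Set (Lit α)

/-- The epistemic reduct of an ELP rule w.r.t. a guess `Φ`: epistemic
literals in `Φ` become `⊤`, the remaining epistemic negations become default
negation (with `¬¬¬a` identified with `¬a`). -/
def ERule.reduct {α : Type u} (r : ERule α) (Φ : Set (Lit α)) : Rule α :=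
  ⟨r.head, r.pbody, r.nbody ∪ (r.ebody \ Φ) ∪ (Lit.flip '' (r.nebody \ Φ))⟩

/-- The epistemic reduct of a set of ELP rules w.r.t. a guess `Φ`.  Rules with
a body literal `¬ not ℓ` for some `not ℓ ∈ Φ` get body `¬⊤` and are dropped. -/
def epReduct {α : Type u} (R : Set (ERule α)) (Φ : Set (Lit α)) : Set (Rule α) :=
  (fun r => r.reduct Φ) '' {r ∈ R | ∀ l ∈ r.nebody, l ∉ Φ}

/-- An epistemic logic program `(𝒜, ℰ, ℛ)`. -/
structure ELP (α : Type u) where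
  atoms : Set α
  elits : Set (Lit α)
  rules : Set (ERule α)

/-- Union of two ELPs. -/
def ELP.union {α : Type u} (P1 P2 : ELP α) : ELP α :=
  ⟨P1.atoms ∪ P2.atoms, P1.elits ∪ P2.elits, P1.rules ∪ P2.rules⟩

/-- The fact rule `a ←` as a plain rule. -/
def factRule {α : Type u} (a : α) : Rule α := ⟨{a}, ∅, ∅⟩

/-- The fact rule `a ←` as an ELP rule. -/
def factERule {α : Type u} (a : α) : ERule α := ⟨{a}, ∅, ∅, ∅, ∅⟩

/-- A set of facts viewed as an ELP. -/
def factELP {α : Type u} (D : Set α) : ELP α := ⟨D, ∅, factERule '' D⟩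

/-- Add a set of facts to an ELP. -/
def addFacts {α : Type u} (P : ELP α) (D : Set α) : ELP α := P.union (factELP D)

/-- `M` is `Φ`-compatible w.r.t. `E`. -/
def compatible {α : Type u} (M : Set (Set α)) (Φ E : Set (Lit α)) : Prop :=
  M.Nonempty ∧ (∀ l ∈ Φ, ∃ I ∈ M, ¬ litSat I l) ∧
    (∀ l ∈ E \ Φ, ∀ I ∈ M, litSat I l)

/-- `M` is a candidate world view of `Π` associated with guess `Φ`. -/
def isCWVwith {α : Type u} (P : ELP α) (Φ : Set (Lit α)) (M : Set (Set α)) : Prop :=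
  Φ ⊆ P.elits ∧ M = answerSets (epReduct P.rules Φ) ∧ compatible M Φ P.elits

/-- `M` is a candidate world view of `Π`. -/
def isCWV {α : Type u} (P : ELP α) (M : Set (Set α)) : Prop :=
  ∃ Φ, isCWVwith P Φ M

/-- `M` is a world view of `Π` associated with guess `Φ`: a CWV whose guess is
subset-maximal among guesses yielding CWVs. -/
def isWVwith {α : Type u} (P : ELP α) (Φ : Set (Lit α)) (M : Set (Set α)) : Prop :=
  isCWVwith P Φ M ∧ ∀ Φ' M', isCWVwith P Φ' M' → ¬ Φ ⊂ Φ'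

/-- `M` is a world view of `Π`. -/
def isWV {α : Type u} (P : ELP α) (M : Set (Set α)) : Prop :=
  ∃ Φ, isWVwith P Φ M

/-- CWV-equivalence of two ELPs. -/
def cwvEq {α : Type u} (P1 P2 : ELP α) : Prop := ∀ M, isCWV P1 M ↔ isCWV P2 M

/-- WV-equivalence of two ELPs. -/
def wvEq {α : Type u} (P1 P2 : ELP α) : Prop := ∀ M, isWV P1 M ↔ isWV P2 M

/-- Uniform CWV-equivalence of two ELPs. -/
def uniformCWVEq {α : Type u} (P1 P2 : ELP α) : Prop :=
  ∀ D ⊆ P1.atoms, cwvEq (addFacts P1 D) (addFacts P2 D)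

/-- Uniform WV-equivalence of two ELPs. -/
def uniformWVEq {α : Type u} (P1 P2 : ELP α) : Prop :=
  ∀ D ⊆ P1.atoms, wvEq (addFacts P1 D) (addFacts P2 D)

/-- Strong equivalence of two ELPs. -/
def strongEq {α : Type u} (P1 P2 : ELP α) : Prop :=
  ∀ P : ELP α, cwvEq (P1.union P) (P2.union P)

/-- The `W`-UE-function of an ELP: maps a guess `Φ` and set of facts `D` to
the set of answer sets of `(Π ∪ D)^Φ` if this is a `W`-view of `Π ∪ D`
associated with `Φ`, and to `∅` otherwise. -/
def ueFun {α : Type u} (W : ELP α → Set (Lit α) → Set (Set α) → Prop)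
    (P : ELP α) (Φ : Set (Lit α)) (D : Set α) : Set (Set α) :=
  {I | W (addFacts P D) Φ (answerSets (epReduct (addFacts P D).rules Φ)) ∧
       I ∈ answerSets (epReduct (addFacts P D).rules Φ)}

/-- Lifting a plain rule to an ELP rule. -/
def Rule.toERule {α : Type u} (r : Rule α) : ERule α :=
  ⟨r.head, r.pbody, r.nbody, ∅, ∅⟩

/-- Uniform equivalence of plain logic programs relative to atoms `A`. -/
def uniformLPEq {α : Type u} (A : Set α) (P1 P2 : Set (Rule α)) : Prop :=
  ∀ D ⊆ A, answerSets (P1 ∪ factRule '' D) = answerSets (P2 ∪ factRule '' D)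

/-- The guess of a CWV is determined by `M` and the elits. -/
lemma guess_eq {α : Type u} (P : ELP α) (Φ : Set (Lit α)) (M : Set (Set α))
    (hC : isCWVwith P Φ M) :
    Φ = {l ∈ P.elits | ∃ I ∈ M, ¬ litSat I l} := by
  obtain ⟨hsub, -, -, hin, hout⟩ := hC
  ext l
  constructor
  · intro hl
    exact ⟨hsub hl, hin l hl⟩
  · rintro ⟨hlE, I, hIM, hIl⟩
    by_contra hlΦ
    exact hIl (hout l ⟨hlE, hlΦ⟩ I hIM)

lemma cwvwith_iff {α : Type u} (Q1 Q2 : ELP α) (hE : Q1.elits = Q2.elits)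
    (hcwv : cwvEq Q1 Q2) (Φ : Set (Lit α)) (M : Set (Set α)) :
    isCWVwith Q1 Φ M ↔ isCWVwith Q2 Φ M := by
  constructor <;> intro hC
  · obtain ⟨Φ', hC'⟩ := (hcwv M).1 ⟨Φ, hC⟩
    have : Φ' = Φ := by rw [guess_eq Q2 Φ' M hC', guess_eq Q1 Φ M hC, hE]
    rwa [this] at hC'
  · obtain ⟨Φ', hC'⟩ := (hcwv M).2 ⟨Φ, hC⟩
    have : Φ' = Φ := by rw [guess_eq Q1 Φ' M hC', guess_eq Q2 Φ M hC, hE]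
    rwa [this] at hC'

/-- Uniform CWV-equivalence implies uniform WV-equivalence. -/
theorem stmt4 {α : Type u} (P1 P2 : ELP α) (hA : P1.atoms = P2.atoms)
    (hE : P1.elits = P2.elits) (h : uniformCWVEq P1 P2) :
    uniformWVEq P1 P2 := by
  intro D hD M
  have hE' : (addFacts P1 D).elits = (addFacts P2 D).elits := by
    simp [addFacts, ELP.union, factELP, hE]
  have hcwv := h D hD
  have key := cwvwith_iff (addFacts P1 D) (addFacts P2 D) hE' hcwv
  constructor <;> rintro ⟨Φ, hC, hmax⟩
  · exact ⟨Φ, (key Φ M).1 hC, fun Φ' M' hC' => hmax Φ' M' ((key Φ' M').2 hC')⟩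
  · exact ⟨Φ, (key Φ M).2 hC, fun Φ' M' hC' => hmax Φ' M' ((key Φ' M').1 hC')⟩
end

section
/- For W ∈ {CWV, WV}, two ELPs Π1 and Π2 over the same atoms A and epistemic literals E are uniformly W-equivalent if and only if their W-UE-functions coincide, where the W-UE-function of Π maps each pair (Φ, D) with Φ ⊆ E and D ⊆ A to AS((Π ∪ D)^Φ) if this set is a W-view of Π ∪ D associated with guess Φ, and to ∅ otherwise. -/
universe u

lemma elits_addFacts {α : Type u} (P : ELP α) (D : Set α) :
    (addFacts P D).elits = P.elits := by
  simp [addFacts, ELP.union, factELP]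

lemma compat_unique {α : Type u} {M : Set (Set α)} {Φ Φ' E : Set (Lit α)}
    (h1 : Φ ⊆ E) (h2 : Φ' ⊆ E) (c1 : compatible M Φ E) (c2 : compatible M Φ' E) :
    Φ = Φ' := by
  ext l
  constructor
  · intro hl
    by_contra hl'
    obtain ⟨I, hI, hns⟩ := c1.2.1 l hl
    exact hns (c2.2.2 l ⟨h1 hl, hl'⟩ I hI)
  · intro hl
    by_contra hl'
    obtain ⟨I, hI, hns⟩ := c2.2.1 l hl
    exact hns (c1.2.2 l ⟨h2 hl, hl'⟩ I hI)

/-- Transfer a `W`-view with its guess from `P1 ∪ D` to `P2 ∪ D`, using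
uniqueness of the compatible guess. -/
lemma transfer {α : Type u} {P1 P2 : ELP α} (hE : P1.elits = P2.elits)
    {W : ELP α → Set (Lit α) → Set (Set α) → Prop}
    (hW : ∀ P Φ M, W P Φ M → isCWVwith P Φ M)
    {D : Set α} {Φ : Set (Lit α)} {M : Set (Set α)}
    (hfw : (∃ Φ', W (addFacts P1 D) Φ' M) → (∃ Φ', W (addFacts P2 D) Φ' M))
    (h1 : W (addFacts P1 D) Φ M) :
    W (addFacts P2 D) Φ M ∧ M = answerSets (epReduct (addFacts P2 D).rules Φ) := by
  obtain ⟨Φ₂, h2⟩ := hfw ⟨Φ, h1⟩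
  obtain ⟨hsub1, hM1, hc1⟩ := hW _ _ _ h1
  obtain ⟨hsub2, hM2, hc2⟩ := hW _ _ _ h2
  have hE1 : (addFacts P2 D).elits = (addFacts P1 D).elits := by
    rw [elits_addFacts, elits_addFacts, hE]
  rw [hE1] at hsub2 hc2
  have hΦ : Φ₂ = Φ := (compat_unique hsub1 hsub2 hc1 hc2).symm
  subst hΦ
  exact ⟨h2, hM2⟩

/-- Backward direction: equality of UE-functions transfers a `W`-view. -/
lemma bwd {α : Type u} {P1 P2 : ELP α}
    {W : ELP α → Set (Lit α) → Set (Set α) → Prop}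
    (hW : ∀ P Φ M, W P Φ M → isCWVwith P Φ M)
    {D : Set α} {Φ : Set (Lit α)} {M : Set (Set α)}
    (heq : ueFun W P1 Φ D = ueFun W P2 Φ D)
    (h1 : W (addFacts P1 D) Φ M) : W (addFacts P2 D) Φ M := by
  obtain ⟨hsub, hM, hc⟩ := hW _ _ _ h1
  have c1 : W (addFacts P1 D) Φ (answerSets (epReduct (addFacts P1 D).rules Φ)) :=
    hM ▸ h1
  obtain ⟨I, hI⟩ := hc.1
  have hI1 : I ∈ ueFun W P1 Φ D := ⟨c1, hM ▸ hI⟩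
  rw [heq] at hI1
  obtain ⟨c2, -⟩ := hI1
  have e1 : ueFun W P1 Φ D = M := by
    rw [hM]
    ext J
    simp only [ueFun, Set.mem_setOf_eq]
    exact and_iff_right c1
  have e2 : ueFun W P2 Φ D = answerSets (epReduct (addFacts P2 D).rules Φ) := by
    ext J
    simp only [ueFun, Set.mem_setOf_eq]
    exact and_iff_right c2
  have hM2 : M = answerSets (epReduct (addFacts P2 D).rules Φ) := by
    rw [← e2, ← heq, e1]
  rw [hM2]
  exact c2

/-- The generic equivalence, for any notion `W` of view refining CWVs. -/
lemma key {α : Type u} (P1 P2 : ELP α) (hE : P1.elits = P2.elits)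
    (W : ELP α → Set (Lit α) → Set (Set α) → Prop)
    (hW : ∀ P Φ M, W P Φ M → isCWVwith P Φ M) :
    (∀ D ⊆ P1.atoms, ∀ M,
        (∃ Φ, W (addFacts P1 D) Φ M) ↔ (∃ Φ, W (addFacts P2 D) Φ M)) ↔
    (∀ Φ ⊆ P1.elits, ∀ D ⊆ P1.atoms, ueFun W P1 Φ D = ueFun W P2 Φ D) := by
  constructor
  · intro h Φ hΦ D hD
    by_cases c1 : W (addFacts P1 D) Φ (answerSets (epReduct (addFacts P1 D).rules Φ))
    · obtain ⟨c2, hAS⟩ := transfer hE hW (fun h' => (h D hD _).mp h') c1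
      have c2' : W (addFacts P2 D) Φ (answerSets (epReduct (addFacts P2 D).rules Φ)) :=
        hAS ▸ c2
      ext I
      simp only [ueFun, Set.mem_setOf_eq]
      rw [← hAS]
      exact ⟨fun ⟨_, hI⟩ => ⟨c2, hI⟩, fun ⟨_, hI⟩ => ⟨c1, hI⟩⟩
    · by_cases c2 : W (addFacts P2 D) Φ (answerSets (epReduct (addFacts P2 D).rules Φ))
      · exfalso
        obtain ⟨c1', hAS⟩ := transfer hE.symm hW (fun h' => (h D hD _).mpr h') c2
        exact c1 (hAS ▸ c1')
      · ext I
        simp only [ueFun, Set.mem_setOf_eq]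
        exact ⟨fun ⟨hc, _⟩ => absurd hc c1, fun ⟨hc, _⟩ => absurd hc c2⟩
  · intro h D hD M
    constructor
    · rintro ⟨Φ, h1⟩
      have hΦ : Φ ⊆ P1.elits := by
        rw [← elits_addFacts P1 D]; exact (hW _ _ _ h1).1
      exact ⟨Φ, bwd hW (h Φ hΦ D hD) h1⟩
    · rintro ⟨Φ, h2⟩
      have hΦ : Φ ⊆ P1.elits := by
        rw [hE, ← elits_addFacts P2 D]; exact (hW _ _ _ h2).1
      exact ⟨Φ, bwd hW (h Φ hΦ D hD).symm h2⟩

/-- For `W ∈ {CWV, WV}`, two ELPs over the same atoms and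
epistemic literals are uniformly `W`-equivalent iff their `W`-UE-functions
coincide on all guesses `Φ ⊆ E` and fact sets `D ⊆ A`. -/
theorem stmt10 {α : Type u} (P1 P2 : ELP α) (hA : P1.atoms = P2.atoms)
    (hE : P1.elits = P2.elits) :
    (uniformCWVEq P1 P2 ↔
      ∀ Φ ⊆ P1.elits, ∀ D ⊆ P1.atoms,
        ueFun isCWVwith P1 Φ D = ueFun isCWVwith P2 Φ D) ∧
    (uniformWVEq P1 P2 ↔
      ∀ Φ ⊆ P1.elits, ∀ D ⊆ P1.atoms,
        ueFun isWVwith P1 Φ D = ueFun isWVwith P2 Φ D) := by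
  constructor
  · exact key P1 P2 hE isCWVwith (fun _ _ _ h => h)
  · exact key P1 P2 hE isWVwith (fun _ _ _ h => h.1)
end
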